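/- Let (δᵢ: Cᵢ → Dᵢ)_{i∈I} be frank functors, K⊆I finite, and assume hom(a,b) is finite for all objects a,b of Cᵢ with i∈K. If δᵢ fulfills (P) at aᵢ∈ob(Cᵢ) for each i∈K, then the product functor ⊗_I δᵢ fulfills (P) at the object (aᵢ)_{i∈K} of ⊗_I Cᵢ. -/

import Mathlib

open CategoryTheory

universe v u w

/-- A functor `δ` with domain `C` fulfills (P) at the pair `a, b`. -/
def FulfillsP {C : Type*} [Category C] {D : Type*} [Category D]
    (δ : C ⥤ D) (a b : C) : Prop :=
  ∀ r : ℕ, ∃ c : C, ∀ χ : (a ⟶ c) → Fin r, ∃ g : b ⟶ c,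
    ∀ f₁ f₂ : a ⟶ b, δ.map f₁ = δ.map f₂ → χ (f₁ ≫ g) = χ (f₂ ≫ g)

/-- A functor `δ : C ⥤ D` is frank. -/
def Frank {C : Type*} [Category C] {D : Type*} [Category D] (δ : C ⥤ D) : Prop :=
  ∀ (a : C) (b' : D), ∃ b : C, δ.obj b = b' ∧
    ∀ g' : δ.obj a ⟶ δ.obj b, ∃ f : a ⟶ b, δ.map f = g'

/-- The finitely supported product of the categories `C i`, `i ∈ I`: objects are tuples
`(c i)_{i ∈ K}` for a finite `K ⊆ I`, morphisms are tuples of morphisms between objects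
with the same support (there are no morphisms between different supports). -/
abbrev FinSuppProd (I : Type w) (C : I → Type u) [∀ i, Category.{v} (C i)] :=
  Σ K : Finset I, ∀ i : K, C i.1

/-- The finitely supported product of a family of functors `δ i : C i ⥤ D i`,
acting coordinatewise on objects and morphisms. -/
def finSuppProdFunctor {I : Type w} {C : I → Type u} [∀ i, Category.{v} (C i)]
    {D : I → Type u} [∀ i, Category.{v} (D i)] (δ : ∀ i, C i ⥤ D i) :
    FinSuppProd I C ⥤ FinSuppProd I D :=
  Sigma.Functor.sigma (fun K : Finset I => Functor.pi (fun i : K => δ i.1))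

/-!
(P) is transported along a full functor `T` that commutes up to isomorphism with the two
functors and a faithful functor on the codomains, hence along equivalences of categories and
isomorphisms of objects. By induction on the finite index type (via `Option`) it then suffices
to treat a binary product `δ₁ × δ₂`: choose `c₁` for `δ₁` with one colour per colouring of
`hom(a₂, b₂)`, then `c₂` for `δ₂` with one colour per colouring of `hom(a₁, c₁)`; a colouring of
`hom(a₁, c₁) × hom(a₂, c₂)` is made insensitive first in the second coordinate, then in the
first. In the finitely supported product there are no morphisms between different supports.
-/

namespace CategoryTheory.FulfillsP

variable {C : Type*} [Category C] {D : Type*} [Category D] {δ : C ⥤ D}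

theorem of_iso {a a' b b' : C} (h : FulfillsP δ a b) (α : a ≅ a') (β : b ≅ b') :
    FulfillsP δ a' b' := by
  intro r
  obtain ⟨c, hc⟩ := h r
  refine ⟨c, fun χ => ?_⟩
  obtain ⟨g, hg⟩ := hc (fun h => χ (α.inv ≫ h))
  refine ⟨β.inv ≫ g, fun f₁ f₂ hf => ?_⟩
  simpa using hg (α.hom ≫ f₁ ≫ β.inv) (α.hom ≫ f₂ ≫ β.inv) (by simp [hf])

theorem of_subsingleton_hom {a b : C} [Subsingleton (a ⟶ b)] : FulfillsP δ a b :=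
  fun _ => ⟨b, fun _ => ⟨𝟙 b, fun f₁ f₂ _ => by rw [Subsingleton.elim f₁ f₂]⟩⟩

theorem exists_coloring {a b : C} (h : FulfillsP δ a b) (κ : Type*) [Finite κ] :
    ∃ c : C, ∀ χ : (a ⟶ c) → κ, ∃ g : b ⟶ c,
      ∀ f₁ f₂ : a ⟶ b, δ.map f₁ = δ.map f₂ → χ (f₁ ≫ g) = χ (f₂ ≫ g) := by
  obtain ⟨r, ⟨e⟩⟩ := Finite.exists_equiv_fin κ
  obtain ⟨c, hc⟩ := h r
  refine ⟨c, fun χ => ?_⟩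
  obtain ⟨g, hg⟩ := hc (e ∘ χ)
  exact ⟨g, fun f₁ f₂ hf => e.injective (hg f₁ f₂ hf)⟩

theorem map {C' : Type*} [Category C'] {D' : Type*} [Category D'] {a b : C}
    (h : FulfillsP δ a b) (T : C ⥤ C') [T.Full] (δ' : C' ⥤ D') (B : D ⥤ D') [B.Faithful]
    [CatCommSq T δ δ' B] : FulfillsP δ' (T.obj a) (T.obj b) := by
  intro r
  obtain ⟨c, hc⟩ := h r
  refine ⟨T.obj c, fun χ => ?_⟩
  obtain ⟨g, hg⟩ := hc (fun f => χ (T.map f))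
  refine ⟨T.map g, fun f₁ f₂ hf => ?_⟩
  obtain ⟨f₁, rfl⟩ := T.map_surjective f₁
  obtain ⟨f₂, rfl⟩ := T.map_surjective f₂
  have hδ : δ.map f₁ = δ.map f₂ := B.map_injective <| by
    rw [← Functor.comp_map, ← Functor.comp_map, ← NatIso.naturality_1 (CatCommSq.iso T δ δ' B),
      ← NatIso.naturality_1 (CatCommSq.iso T δ δ' B), Functor.comp_map, Functor.comp_map, hf]
  rw [← T.map_comp, ← T.map_comp]
  exact hg f₁ f₂ hδ

theorem of_equivalence {C' : Type*} [Category C'] {D' : Type*} [Category D'] (E : C ≌ C')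
    (δ' : C' ⥤ D') (B : D ⥤ D') [B.Faithful] [CatCommSq E.functor δ δ' B] {a b : C'}
    (h : FulfillsP δ (E.inverse.obj a) (E.inverse.obj b)) : FulfillsP δ' a b :=
  (h.map E.functor δ' B).of_iso (E.counitIso.app a) (E.counitIso.app b)

theorem prod {C₁ : Type*} [Category C₁] {D₁ : Type*} [Category D₁] {C₂ : Type*} [Category C₂]
    {D₂ : Type*} [Category D₂] {δ₁ : C₁ ⥤ D₁} {δ₂ : C₂ ⥤ D₂} {a₁ b₁ : C₁} {a₂ b₂ : C₂}
    [∀ c, Finite (a₁ ⟶ c)] [Finite (a₂ ⟶ b₂)]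
    (h₁ : FulfillsP δ₁ a₁ b₁) (h₂ : FulfillsP δ₂ a₂ b₂) :
    FulfillsP (δ₁.prod δ₂) (a₁, a₂) (b₁, b₂) := by
  intro r
  obtain ⟨c₁, hc₁⟩ := h₁.exists_coloring ((a₂ ⟶ b₂) → Fin r)
  obtain ⟨c₂, hc₂⟩ := h₂.exists_coloring ((a₁ ⟶ c₁) → Fin r)
  refine ⟨(c₁, c₂), fun χ => ?_⟩
  obtain ⟨g₂, hg₂⟩ := hc₂ (fun u v => χ (v, u))
  obtain ⟨g₁, hg₁⟩ := hc₁ (fun v u => χ (v, u ≫ g₂))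
  refine ⟨(g₁, g₂), fun f f' hf => ?_⟩
  have hf₁ : δ₁.map f.1 = δ₁.map f'.1 := congrArg (·.1) hf
  have hf₂ : δ₂.map f.2 = δ₂.map f'.2 := congrArg (·.2) hf
  calc χ (f.1 ≫ g₁, f.2 ≫ g₂)
      = χ (f.1 ≫ g₁, f'.2 ≫ g₂) := congrFun (hg₂ f.2 f'.2 hf₂) (f.1 ≫ g₁)
    _ = χ (f'.1 ≫ g₁, f'.2 ≫ g₂) := congrFun (hg₁ f.1 f'.1 hf₁) f'.2

theorem pi {J : Type w} [Finite J] {C : J → Type u} [∀ j, Category.{v} (C j)]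
    {D : J → Type u} [∀ j, Category.{v} (D j)] (δ : ∀ j, C j ⥤ D j)
    (hfin : ∀ j, ∀ x y : C j, Finite (x ⟶ y)) (a : ∀ j, C j)
    (hP : ∀ j, ∀ c : C j, FulfillsP (δ j) (a j) c) (b : ∀ j, C j) :
    FulfillsP (Functor.pi δ) a b := by
  revert J
  apply Finite.induction_empty_option
  · intro J₁ J₂ e IH C _ D _ δ hfin a hP b
    let E := Pi.equivalenceOfEquiv C e
    let E' := Pi.equivalenceOfEquiv D e
    have : CatCommSq E.functor (Functor.pi fun j => δ (e j)) (Functor.pi δ) E'.functor :=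
      (CatCommSq.hInvEquiv E _ _ E').symm ⟨Iso.refl _⟩
    exact of_equivalence E _ E'.functor
      (IH _ (fun j => hfin (e j)) _ (fun j => hP (e j)) _)
  · intro C _ D _ δ _ a _ b
    have : Subsingleton (a ⟶ b) := ⟨fun _ _ => funext fun j : PEmpty => j.elim⟩
    exact of_subsingleton_hom
  · intro J _ IH C _ D _ δ hfin a hP b
    let E := (Pi.optionEquivalence C).symm
    have : CatCommSq E.functor ((δ none).prod (Functor.pi fun j => δ (some j))) (Functor.pi δ)
        (Pi.optionEquivalence D).symm.functor :=
      ⟨NatIso.pi' (by rintro (_ | i) <;> apply Iso.refl)⟩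
    have : ∀ c, Finite (a none ⟶ c) := hfin none _
    have : Finite (∀ j, a (some j) ⟶ b (some j)) := @Pi.finite _ _ _ fun j => hfin _ _ _
    have h : FulfillsP ((δ none).prod (Functor.pi fun j => δ (some j)))
        (a none, fun j => a (some j)) (b none, fun j => b (some j)) :=
      (hP none (b none)).prod (IH _ (fun j => hfin (some j)) _ (fun j => hP (some j)) _)
    exact of_equivalence E _ (Pi.optionEquivalence D).symm.functor h

theorem sigma {I : Type*} {C : I → Type u} [∀ i, Category.{v} (C i)] {D : I → Type u}
    [∀ i, Category.{v} (D i)] (F : ∀ i, C i ⥤ D i) {i : I} {a : C i}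
    (h : ∀ b, FulfillsP (F i) a b) :
    ∀ b : Σ i, C i, FulfillsP (Sigma.Functor.sigma F) ⟨i, a⟩ b := by
  rintro ⟨j, b⟩
  by_cases hij : i = j
  · subst hij
    have : CatCommSq (Sigma.incl i) (F i) (Sigma.Functor.sigma F) (Sigma.incl i) :=
      ⟨Sigma.inclDesc _ i⟩
    exact (h b).map (Sigma.incl i) _ (Sigma.incl i)
  · have : IsEmpty ((⟨i, a⟩ : Σ i, C i) ⟶ ⟨j, b⟩) := ⟨fun f => by
      change Sigma.SigmaHom _ _ at f
      cases f
      exact hij rfl⟩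
    exact of_subsingleton_hom

end CategoryTheory.FulfillsP

theorem fulfillsP_finSuppProdFunctor_general {I : Type w} {C : I → Type u} [∀ i, Category.{v} (C i)]
    {D : I → Type u} [∀ i, Category.{v} (D i)] (δ : ∀ i, C i ⥤ D i)
    (K : Finset I) (a : ∀ i : K, C i.1)
    (hfin : ∀ i ∈ K, ∀ x y : C i, Finite (x ⟶ y))
    (hP : ∀ i : K, ∀ b : C i.1, FulfillsP (δ i.1) (a i) b) :
    ∀ b : FinSuppProd I C, FulfillsP (finSuppProdFunctor δ) ⟨K, a⟩ b :=
  FulfillsP.sigma _ fun b => FulfillsP.pi _ (fun i => hfin i.1 i.2) a hP b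

/-- Let `δ i : C i ⥤ D i` be frank functors, `K ⊆ I` finite, and assume `hom(x,y)` is finite
for all objects `x, y` of `C i` with `i ∈ K`. If `δ i` fulfills (P) at `a i` (i.e. at the
pair `a i, b` for every `b`) for each `i ∈ K`, then the product functor `⊗_I δ i` fulfills
(P) at the object `(a i)_{i ∈ K}` (i.e. at the pair `(a i)_K, b` for every object `b`). -/
theorem fulfillsP_finSuppProdFunctor {I : Type w} {C : I → Type u} [∀ i, Category.{v} (C i)]
    {D : I → Type u} [∀ i, Category.{v} (D i)] (δ : ∀ i, C i ⥤ D i)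
    (hfrank : ∀ i, Frank (δ i))
    (K : Finset I) (a : ∀ i : K, C i.1)
    (hfin : ∀ i ∈ K, ∀ x y : C i, Finite (x ⟶ y))
    (hP : ∀ i : K, ∀ b : C i.1, FulfillsP (δ i.1) (a i) b) :
    ∀ b : FinSuppProd I C, FulfillsP (finSuppProdFunctor δ) ⟨K, a⟩ b :=
  fulfillsP_finSuppProdFunctor_general δ K a hfin hP
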